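/- arXiv:2011.14690 — 3 statements merged into one kernel-verified Lean document; each statement's English description precedes it below -/
import Mathlib

section
/- Let t ≥ 4 be even, let D be a symmetric cycle in the hypercube graph on {1,−1}^t with subtopes S^k = (1/2)(D^k + D^{k+1}), k = 0,…,2t−1. Let T′, T″ ∈ {1,−1}^t be adjacent vertices (Hamming distance 1) and S := (1/2)(T′ + T″) their common subtope. Then there exist a subset Q̄ ⊂ {S^0,…,S^{2t−1}} and positive integers λ_Q with 1 ≤ λ_Q ≤ t−1 (Q ∈ Q̄) such that S = Σ_{Q ∈ Q̄} λ_Q · Q, where Q̄ contains at most one element from each antipodal pair {S^k, S^{k+t}}. -/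
/-!
Write S^l = (D^l + D^{l+1})/2. Telescoping with D^t = -D^0 and t even gives
D^0 = Σ_{l<t} (-1)^l S^l, and D^{n+1} = 2 S^n - D^n then writes every D^n, n ≤ t, as a
±1-combination of S^0, …, S^{t-1}. Since D^t = -D^0, every coordinate i flips at some step
μ < t, and it is the only coordinate flipping there, so the unit vector e_i equals
±(D^μ - D^{μ+1})/2, a combination of the S^l with coefficients in {-1, 0, 1}. The subtope
(T' + T'')/2 is a sum of at most t - 1 signed unit vectors (it vanishes where T' and T''
differ), so its coefficients are integers of absolute value at most t - 1.
-/

open Finset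

def cycleCoeff (n l : ℕ) : ℤ := (-1) ^ (l + n) * if n ≤ l then 1 else -1

def flipCoeff (μ l : ℕ) : ℤ := (-1) ^ (l + μ) * Int.sign ((l : ℤ) - μ)

lemma cycleCoeff_succ (n l : ℕ) :
    cycleCoeff (n + 1) l = (if l = n then 2 else 0) - cycleCoeff n l := by
  unfold cycleCoeff
  rcases lt_trichotomy l n with h | rfl | h
  · rw [if_neg h.ne, if_neg (by omega), if_neg (by omega)]; ring
  · rw [if_pos rfl, if_pos le_rfl, if_neg (by omega), ← add_assoc, ← two_mul, pow_succ,
      (even_two_mul l).neg_one_pow]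
    ring
  · rw [if_neg h.ne', if_pos (by omega), if_pos (by omega)]; ring

lemma cycleCoeff_sub_succ (μ l : ℕ) :
    cycleCoeff μ l - cycleCoeff (μ + 1) l = 2 * flipCoeff μ l := by
  rw [cycleCoeff_succ]
  unfold cycleCoeff flipCoeff
  rcases lt_trichotomy l μ with h | rfl | h
  · rw [if_neg h.ne, if_neg (by omega), Int.sign_eq_neg_one_of_neg (by omega)]; ring
  · simp [← two_mul, (even_two_mul l).neg_one_pow]
  · rw [if_neg h.ne', if_pos (by omega), Int.sign_eq_one_of_pos (by omega)]; ring

lemma abs_flipCoeff_le_one (μ l : ℕ) : |flipCoeff μ l| ≤ 1 := by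
  rw [flipCoeff, abs_mul, abs_pow, abs_neg, abs_one, one_pow, one_mul]
  rcases Int.sign_trichotomy ((l : ℤ) - μ) with h | h | h <;> simp [h]

lemma sum_range_neg_one_pow_smul_add {V : Type*} [AddCommGroup V] (x : ℕ → V) (n : ℕ) :
    ∑ l ∈ range n, (-1 : ℤ) ^ l • (x l + x (l + 1)) = x 0 - (-1 : ℤ) ^ n • x n := by
  induction n with
  | zero => simp
  | succ n ih =>
    rw [sum_range_succ, ih, pow_succ, smul_add, mul_neg_one, neg_smul]
    abel

lemma two_smul_eq_sum_cycleCoeff_smul {V : Type*} [AddCommGroup V] {t : ℕ} (ht : Even t)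
    {x : ℕ → V} (hx : x t = -x 0) {n : ℕ} (hn : n ≤ t) :
    (2 : ℤ) • x n = ∑ l ∈ range t, cycleCoeff n l • (x l + x (l + 1)) := by
  induction n with
  | zero =>
    simp only [cycleCoeff, add_zero, zero_le, if_true, mul_one, sum_range_neg_one_pow_smul_add,
      hx, ht.neg_one_pow, one_smul, sub_neg_eq_add, two_smul]
  | succ n ih =>
    simp_rw [cycleCoeff_succ, sub_smul, sum_sub_distrib, ite_smul, zero_smul, sum_ite_eq',
      mem_range, if_pos (show n < t by omega), ← ih (by omega), smul_add]
    abel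

lemma sub_div_two_eq_sum_flipCoeff {K : Type*} [Field K] [CharZero K] {t : ℕ} (ht : Even t)
    {x : ℕ → K} (hx : x t = -x 0) {μ : ℕ} (hμ : μ < t) :
    (x μ - x (μ + 1)) / 2 = ∑ l ∈ range t, (flipCoeff μ l : K) * ((x l + x (l + 1)) / 2) := by
  have h₁ := two_smul_eq_sum_cycleCoeff_smul ht hx hμ.le
  have h₂ := two_smul_eq_sum_cycleCoeff_smul ht hx (n := μ + 1) hμ
  simp only [zsmul_eq_mul, Int.cast_ofNat] at h₁ h₂
  have key :
      2 * (x μ - x (μ + 1)) = 2 * ∑ l ∈ range t, (flipCoeff μ l : K) * (x l + x (l + 1)) := by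
    rw [mul_sub, h₁, h₂, ← sum_sub_distrib, mul_sum]
    refine sum_congr rfl fun l _ => ?_
    rw [← sub_mul, ← Int.cast_sub, cycleCoeff_sub_succ]
    push_cast; ring
  rw [mul_right_injective₀ two_ne_zero key, sum_div]
  simp_rw [mul_div_assoc]

lemma exists_lt_ne_succ {α : Type*} {x : ℕ → α} {t : ℕ} (h : x t ≠ x 0) :
    ∃ μ < t, x μ ≠ x (μ + 1) := by
  by_contra! hc
  suffices ∀ n ≤ t, x n = x 0 from h (this t le_rfl)
  intro n hn
  induction n with
  | zero => rfl
  | succ n ih => rw [← hc n (by omega), ih (by omega)]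

lemma eq_neg_of_ne_of_eq_one_or {R : Type*} [Ring R] {a b : R} (ha : a = 1 ∨ a = -1)
    (hb : b = 1 ∨ b = -1) (hab : a ≠ b) : b = -a := by
  rcases ha with rfl | rfl <;> rcases hb with rfl | rfl <;>
    first | exact absurd rfl hab | norm_num

lemma exists_int_abs_le_one_cast_eq {R : Type*} [Ring R] {x : R}
    (hx : x = -1 ∨ x = 0 ∨ x = 1) : ∃ z : ℤ, |z| ≤ 1 ∧ (z : R) = x := by
  rcases hx with rfl | rfl | rfl
  · exact ⟨-1, by norm_num, by norm_num⟩
  · exact ⟨0, by norm_num, by norm_num⟩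
  · exact ⟨1, by norm_num, by norm_num⟩

lemma exists_abs_mul_eq (a : ℤ) : ∃ ε : ℤ, (ε = 1 ∨ ε = -1) ∧ |a| * ε = a := by
  rcases abs_choice a with h | h
  · exact ⟨1, Or.inl rfl, by rw [h, mul_one]⟩
  · exact ⟨-1, Or.inr rfl, by rw [h]; ring⟩

lemma abs_sum_mul_le_card_sub_one {ι : Type*} [Fintype ι] [DecidableEq ι] {w v : ι → ℤ}
    (hw : ∀ i, |w i| ≤ 1) (hv : ∀ i, |v i| ≤ 1) {i₀ : ι} (h₀ : w i₀ = 0) :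
    |∑ i, w i * v i| ≤ Fintype.card ι - 1 := by
  calc |∑ i, w i * v i| ≤ ∑ i ∈ univ.erase i₀, |w i * v i| := by
        rw [sum_erase _ (by simp [h₀])]
        exact abs_sum_le_sum_abs _ _
    _ ≤ ∑ i ∈ univ.erase i₀, 1 := by
        gcongr with i
        rw [abs_mul]
        exact mul_le_one₀ (hw i) (abs_nonneg _) (hv i)
    _ = Fintype.card ι - 1 := by
        simp [card_erase_of_mem (mem_univ i₀), Nat.cast_sub (Fintype.card_pos_iff.mpr ⟨i₀⟩)]

lemma intCast_eq_sum_of_single_eq_sum {R ι κ : Type*} [CommRing R] [Fintype ι] [Fintype κ]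
    [DecidableEq ι] {S : κ → ι → R} {v : ι → κ → ℤ}
    (hv : ∀ i j, (Pi.single i 1 : ι → R) j = ∑ l, (v i l : R) * S l j) (w : ι → ℤ) (j : ι) :
    (w j : R) = ∑ l, ((∑ i, w i * v i l : ℤ) : R) * S l j := by
  calc (w j : R) = ∑ i, (w i : R) * (Pi.single i 1 : ι → R) j := by simp [Pi.single_apply]
    _ = ∑ l, ((∑ i, w i * v i l : ℤ) : R) * S l j := by
        simp_rw [hv, mul_sum, Int.cast_sum, Int.cast_mul, sum_mul, mul_assoc]
        exact sum_comm

lemma exists_single_eq_sum_subtope {K : Type*} [Field K] [CharZero K] [DecidableEq K] {t : ℕ}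
    (hev : Even t) (D : ℕ → Fin t → K) (hpm : ∀ k ≤ t, ∀ i, D k i = 1 ∨ D k i = -1)
    (hanti : D t = -D 0) (hstep : ∀ k < t, #{i | D k i ≠ D (k + 1) i} = 1) (i : Fin t) :
    ∃ v : Fin t → ℤ, (∀ l, |v l| ≤ 1) ∧ ∀ j,
      (Pi.single i 1 : Fin t → K) j = ∑ l : Fin t, (v l : K) * ((D l j + D (l + 1) j) / 2) := by
  obtain ⟨μ, hμ, hflip⟩ : ∃ μ < t, D μ i ≠ D (μ + 1) i := by
    refine exists_lt_ne_succ (x := fun k => D k i) ?_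
    rcases hpm 0 (Nat.zero_le t) i with h | h <;> norm_num [hanti, h]
  have hfixed : ∀ j ≠ i, D μ j = D (μ + 1) j := fun j hj => by
    by_contra hne
    exact hj (card_le_one.mp (hstep μ hμ).le j (by simpa using hne) i (by simpa using hflip))
  have hsingle : ∀ j, (Pi.single i 1 : Fin t → K) j = D μ i * ((D μ j - D (μ + 1) j) / 2) := by
    intro j
    rcases eq_or_ne j i with rfl | hj
    · rw [Pi.single_eq_same,
        eq_neg_of_ne_of_eq_one_or (hpm μ hμ.le j) (hpm (μ + 1) hμ j) hflip]
      rcases hpm μ hμ.le j with h | h <;> norm_num [h]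
    · simp [hj, hfixed j hj]
  obtain ⟨σ, hσ, hσD⟩ := exists_int_abs_le_one_cast_eq (x := D μ i) (by
    rcases hpm μ hμ.le i with h | h <;> simp [h])
  refine ⟨fun l => σ * flipCoeff μ l, fun l => ?_, fun j => ?_⟩
  · rw [abs_mul]
    exact mul_le_one₀ hσ (abs_nonneg _) (abs_flipCoeff_le_one μ l)
  · rw [hsingle, sub_div_two_eq_sum_flipCoeff (x := fun k => D k j) hev (by simp [hanti]) hμ,
      mul_sum, ← Fin.sum_univ_eq_sum_range, ← hσD]
    push_cast
    simp_rw [mul_assoc]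

theorem stmt_9_general (t : ℕ) (hev : Even t)
    (D : ℕ → Fin t → ℝ)
    (hpm : ∀ k < 2 * t, ∀ i, D k i = 1 ∨ D k i = -1)
    (hadj : ∀ k < 2 * t,
      (Finset.univ.filter fun i => D k i ≠ D ((k + 1) % (2 * t)) i).card = 1)
    (hsym : ∀ k < t, ∀ i, D (k + t) i = -(D k i))
    (T' T'' : Fin t → ℝ)
    (hT' : ∀ i, T' i = 1 ∨ T' i = -1) (hT'' : ∀ i, T'' i = 1 ∨ T'' i = -1)
    -- T' and T'' are adjacent: Hamming distance 1
    (hH : (Finset.univ.filter fun i => T' i ≠ T'' i).card = 1) :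
    -- the subtope S = (1/2)(T' + T'') decomposes over the subtopes of the cycle,
    -- taking (via the sign ε_k) at most one member of each antipodal pair
    -- {S^k, S^{k+t}} = {S^k, -S^k}, with coefficients c_k, 0 ≤ c_k ≤ t-1
    -- (c_k ≥ 1 exactly on the members used):
    ∃ ε c : Fin t → ℤ,
      (∀ k, ε k = 1 ∨ ε k = -1) ∧
      (∀ k, 0 ≤ c k ∧ c k ≤ (t : ℤ) - 1) ∧
      (∀ i, (T' i + T'' i) / 2 =
        ∑ k : Fin t, ((c k * ε k : ℤ) : ℝ) *
          ((D (k : ℕ) i + D ((k : ℕ) + 1) i) / 2)) := by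
  have hanti : D t = -D 0 := funext fun i => by simpa using hsym 0 i.pos i
  have hstep : ∀ k < t, #{i | D k i ≠ D (k + 1) i} = 1 := fun k hk => by
    simpa [Nat.mod_eq_of_lt (by omega : k + 1 < 2 * t)] using hadj k (by omega)
  have hpm' : ∀ k ≤ t, ∀ i, D k i = 1 ∨ D k i = -1 := fun k hk i =>
    hpm k (by have := i.pos; omega) i
  choose v hv_le hv using exists_single_eq_sum_subtope hev D hpm' hanti hstep
  choose w hw_le hw using fun i => exists_int_abs_le_one_cast_eq (x := (T' i + T'' i) / 2) (by
    rcases hT' i with h | h <;> rcases hT'' i with h' | h' <;> norm_num [h, h'])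
  obtain ⟨j₀, hj₀⟩ := card_eq_one.mp hH
  have hw₀ : w j₀ = 0 := by
    have hne : T' j₀ ≠ T'' j₀ := by
      have : j₀ ∈ univ.filter fun i => T' i ≠ T'' i := hj₀ ▸ mem_singleton_self j₀
      simpa using this
    have : (w j₀ : ℝ) = 0 := by
      rw [hw, eq_neg_of_ne_of_eq_one_or (hT' j₀) (hT'' j₀) hne, add_neg_cancel, zero_div]
    exact_mod_cast this
  choose ε hε hcε using fun l => exists_abs_mul_eq (∑ i, w i * v i l)
  refine ⟨ε, fun l => |∑ i, w i * v i l|, hε, fun l => ⟨abs_nonneg _, ?_⟩, fun j => ?_⟩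
  · simpa using abs_sum_mul_le_card_sub_one hw_le (fun i => hv_le i l) hw₀
  · rw [← hw j, intCast_eq_sum_of_single_eq_sum hv w j]
    simp_rw [hcε]

theorem stmt_9 (t : ℕ) (ht : 4 ≤ t) (hev : Even t)
    (D : ℕ → Fin t → ℝ)
    (hpm : ∀ k < 2 * t, ∀ i, D k i = 1 ∨ D k i = -1)
    (hinj : ∀ k < 2 * t, ∀ l < 2 * t, D k = D l → k = l)
    (hadj : ∀ k < 2 * t,
      (Finset.univ.filter fun i => D k i ≠ D ((k + 1) % (2 * t)) i).card = 1)
    (hsym : ∀ k < t, ∀ i, D (k + t) i = -(D k i))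
    (T' T'' : Fin t → ℝ)
    (hT' : ∀ i, T' i = 1 ∨ T' i = -1) (hT'' : ∀ i, T'' i = 1 ∨ T'' i = -1)
    -- T' and T'' are adjacent: Hamming distance 1
    (hH : (Finset.univ.filter fun i => T' i ≠ T'' i).card = 1) :
    -- the subtope S = (1/2)(T' + T'') decomposes over the subtopes of the cycle,
    -- taking (via the sign ε_k) at most one member of each antipodal pair
    -- {S^k, S^{k+t}} = {S^k, -S^k}, with coefficients c_k, 0 ≤ c_k ≤ t-1
    -- (c_k ≥ 1 exactly on the members used):
    ∃ ε c : Fin t → ℤ,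
      (∀ k, ε k = 1 ∨ ε k = -1) ∧
      (∀ k, 0 ≤ c k ∧ c k ≤ (t : ℤ) - 1) ∧
      (∀ i, (T' i + T'' i) / 2 =
        ∑ k : Fin t, ((c k * ε k : ℤ) : ℝ) *
          ((D (k : ℕ) i + D ((k : ℕ) + 1) i) / 2)) :=
  stmt_9_general t hev D hpm hadj hsym T' T'' hT' hT'' hH
end

section
/- Let t ≥ 4 be even and let R be the distinguished symmetric cycle on {1,−1}^t defined by R^0 = (1,…,1), R^s = R^0 with coordinates 1,…,s negated (1 ≤ s ≤ t−1), R^{k+t} = −R^k. Let W(R) have rows S^k = (1/2)(R^k + R^{k+1}), 0 ≤ k ≤ t−1, and P(t) as above. Then the all-minus-ones vector T^{(−)} = (−1,…,−1) satisfies T^{(−)} = (−P(t)^1)·W(R), where P(t)^1 is the first row of P(t), i.e., P(t)^1 = (1,−1,1,−1,…,1,−1). -/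
/-!
The rows of `W(R)` are half-sums of consecutive vertices of the cycle, so the alternating
combination `∑ (-1)^k S^k` telescopes to `(R^0 - R^t) / 2` when `t` is even. Since
`R^t = -R^0` and `R^0 = (1,…,1)`, this is the all-ones vector, and negating gives `T^{(−)}`.
-/

/-- The alternating-sign Toeplitz matrix P(t). -/
def Pmat (t : ℕ) : Matrix (Fin t) (Fin t) ℝ :=
  Matrix.of fun i j =>
    if (i : ℕ) ≤ (j : ℕ) then (-1 : ℝ) ^ ((i : ℕ) + (j : ℕ))
    else (-1 : ℝ) ^ ((i : ℕ) + (j : ℕ) + 1)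

/-- The distinguished symmetric cycle R in the hypercube graph on {1,-1}^t:
    R^0 = (1,…,1); for 1 ≤ s ≤ t-1, R^s is R^0 with the first s coordinates
    negated; and R^{k+t} = -R^k for 0 ≤ k ≤ t-1. -/
def Rcyc (t : ℕ) : ℕ → Fin t → ℝ := fun s i =>
  if s < t then (if (i : ℕ) < s then -1 else 1)
  else (if (i : ℕ) < s - t then 1 else -1)

/-- The subtope matrix W(R), whose rows are S^k = (1/2)(R^k + R^{k+1}). -/
noncomputable def Wmat (t : ℕ) : Matrix (Fin t) (Fin t) ℝ :=
  Matrix.of fun (k : Fin t) (j : Fin t) =>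
    (Rcyc t (k : ℕ) j + Rcyc t ((k : ℕ) + 1) j) / 2

open Finset

theorem Finset.sum_range_neg_one_pow_mul_add_succ {R : Type*} [CommRing R] (a : ℕ → R) (n : ℕ) :
    ∑ i ∈ range n, (-1) ^ i * (a i + a (i + 1)) = a 0 - (-1) ^ n * a n := by
  have telescope := Finset.sum_range_sub (fun i => (-1 : R) ^ i * a i) n
  rw [pow_zero, one_mul] at telescope
  rw [← neg_sub, ← telescope, ← sum_neg_distrib]
  refine sum_congr rfl fun i _ => ?_
  ring

theorem Pmat_zero_apply {t : ℕ} (ht : 0 < t) (c : Fin t) : Pmat t ⟨0, ht⟩ c = (-1) ^ (c : ℕ) := by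
  simp only [Pmat, Matrix.of_apply, Nat.zero_le, if_true, zero_add]

theorem Rcyc_zero {t : ℕ} (ht : 0 < t) (i : Fin t) : Rcyc t 0 i = 1 := by
  simp [Rcyc, ht]

theorem Rcyc_self (t : ℕ) (i : Fin t) : Rcyc t t i = -1 := by
  simp [Rcyc]

theorem vecMul_neg_one_pow_Wmat (t : ℕ) (j : Fin t) :
    Matrix.vecMul (fun k : Fin t => (-1 : ℝ) ^ (k : ℕ)) (Wmat t) j
      = (Rcyc t 0 j - (-1) ^ t * Rcyc t t j) / 2 := by
  rw [← sum_range_neg_one_pow_mul_add_succ (fun k => Rcyc t k j)]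
  simp only [Matrix.vecMul, dotProduct, Wmat, Matrix.of_apply, mul_div_assoc', ← sum_div]
  rw [Fin.sum_univ_eq_sum_range (fun k => (-1 : ℝ) ^ k * (Rcyc t k j + Rcyc t (k + 1) j))]

theorem stmt_12 (t : ℕ) (ht : 4 ≤ t) (hev : Even t) :
    -- T^{(−)} = (−P(t)^1) · W(R)
    (fun _ : Fin t => (-1 : ℝ)) =
      Matrix.vecMul (fun c => -(Pmat t ⟨0, by omega⟩ c)) (Wmat t) := by
  have ht0 : 0 < t := by omega
  funext j
  simp_rw [Pmat_zero_apply ht0]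
  rw [show (fun c : Fin t => -(-1 : ℝ) ^ (c : ℕ)) = -fun c : Fin t => (-1 : ℝ) ^ (c : ℕ) from rfl,
    Matrix.neg_vecMul, Pi.neg_apply, vecMul_neg_one_pow_Wmat, Rcyc_zero ht0, Rcyc_self,
    hev.neg_one_pow]
  norm_num
end

section
/- Let t ≥ 4 be even, let R be the distinguished symmetric cycle on {1,−1}^t, W(R) its subtope matrix, and P(t) as above. For s ∈ {1,…,t}, let T_s be the vector obtained from (1,…,1) by negating only the s-th coordinate. Then the unique ȳ(s) ∈ ℝ^t with T_s = ȳ(s)·W(R) is: ȳ(1) = P(t)^2; ȳ(s) = P(t)^1 − P(t)^s + P(t)^{s+1} for 1 < s < t; and ȳ(t) = −P(t)^t. -/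
/-!
The rows of `P(t) W(R)` are exactly the cycle vectors `R^0, …, R^{t-1}`. For row `0` this is an
alternating sum that vanishes because `t` is even; then induct, using `P^{m+1} = 2 e_m - P^m` and
`2 S^m = R^m + R^{m+1}`. Consequently `(P(t) - 1) W(R) = 1`, so `W(R)` is invertible and `ȳ(s)` is
unique, and the claimed vectors work because `T_1 = R^1`, `T_s = R^0 - R^{s-1} + R^s` and
`T_t = -R^{t-1}`.
-/

open Matrix

lemma Wmat_apply {t : ℕ} (k j : Fin t) :
    Wmat t k j = if (j : ℕ) < k then -1 else if (j : ℕ) = k then 0 else 1 := by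
  have := k.isLt
  simp only [Wmat, Rcyc, of_apply]
  split_ifs <;> norm_num <;> omega

lemma Pmat_row_succ {t m : ℕ} (hm : m + 1 < t) :
    Pmat t ⟨m + 1, hm⟩ = Pi.single ⟨m, by omega⟩ 2 - Pmat t ⟨m, by omega⟩ := by
  ext j
  simp only [Pmat, of_apply, Pi.sub_apply, Pi.single_apply, Fin.ext_iff]
  split_ifs <;> first | omega | (subst_vars; ring_nf; norm_num) | ring

lemma Pmat_row_zero_vecMul_Wmat {t : ℕ} (hev : Even t) (h0 : 0 < t) :
    Pmat t ⟨0, h0⟩ ᵥ* Wmat t = 1 := by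
  ext c
  have hc := c.isLt
  have hsplit : ∀ k : ℕ, k < t → (-1 : ℝ) ^ k * (if c < k then -1 else if c = k then 0 else 1) =
      (if k < c then (-1) ^ k else 0) + (if k < c + 1 then (-1) ^ k else 0) - (-1) ^ k := by
    intro k _
    split_ifs <;> first | omega | ring
  have hfilter : ∀ n ≤ t, ∑ k ∈ Finset.range t, (if k < n then (-1 : ℝ) ^ k else 0) =
      ∑ k ∈ Finset.range n, (-1 : ℝ) ^ k := by
    intro n hn
    rw [← Finset.sum_filter]
    congr 1
    ext k
    simp only [Finset.mem_filter, Finset.mem_range]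
    omega
  simp only [vecMul, dotProduct, Pmat, Wmat_apply, of_apply, zero_le, if_true, zero_add,
    Pi.one_apply]
  rw [Fin.sum_univ_eq_sum_range (fun k => (-1 : ℝ) ^ k * (if c < k then -1 else if c = k then 0 else 1)),
    Finset.sum_congr rfl fun k hk => hsplit k (Finset.mem_range.mp hk), Finset.sum_sub_distrib,
    Finset.sum_add_distrib, hfilter _ hc.le, hfilter _ hc, neg_one_geom_sum, neg_one_geom_sum,
    neg_one_geom_sum, if_pos hev]
  by_cases h : Even (c : ℕ) <;> simp [h, Nat.even_add_one]

lemma Pmat_row_vecMul_Wmat {t : ℕ} (hev : Even t) (m : Fin t) :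
    Pmat t m ᵥ* Wmat t = Rcyc t m := by
  obtain ⟨m, hm⟩ := m
  induction m with
  | zero =>
    rw [Pmat_row_zero_vecMul_Wmat hev]
    ext j
    simp [Rcyc, hm]
  | succ m ih =>
    rw [Pmat_row_succ hm, sub_vecMul, single_vecMul, ih (by omega)]
    ext j
    simp only [Pi.sub_apply, Pi.smul_apply, row_def, smul_eq_mul, Wmat, of_apply]
    ring

lemma Pmat_sub_one_mul_Wmat {t : ℕ} (hev : Even t) : (Pmat t - 1) * Wmat t = 1 := by
  ext m c
  have := m.isLt
  rw [Matrix.sub_mul, Matrix.one_mul, Matrix.sub_apply, mul_apply_eq_vecMul,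
    Pmat_row_vecMul_Wmat hev, Matrix.one_apply]
  simp only [Wmat, Rcyc, of_apply, Fin.ext_iff]
  split_ifs <;> first | omega | norm_num

lemma isUnit_Wmat {t : ℕ} (hev : Even t) : IsUnit (Wmat t) :=
  IsUnit.of_mul_eq_one_right _ (Pmat_sub_one_mul_Wmat hev)

theorem stmt_15 (t : ℕ) (ht : 4 ≤ t) (hev : Even t)
    (s : ℕ)
    (y : Fin t → ℝ)
    -- ȳ(s) is the (unique) vector with _{−s}T^{(+)} = ȳ(s) · W(R)
    (hy : Matrix.vecMul y (Wmat t) =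
      fun c : Fin t => if (c : ℕ) + 1 = s then (-1 : ℝ) else 1) :
    (s = 1 → y = fun c => Pmat t ⟨1, by omega⟩ c) ∧
    (∀ h1 : 1 < s, ∀ h2 : s < t,
      y = fun c => Pmat t ⟨0, by omega⟩ c - Pmat t ⟨s - 1, by omega⟩ c
        + Pmat t ⟨s, h2⟩ c) ∧
    (s = t → y = fun c => -(Pmat t ⟨t - 1, by omega⟩ c)) := by
  have hinj := vecMul_injective_of_isUnit (isUnit_Wmat hev)
  refine ⟨fun hs => hinj ?_, fun h1 h2 => hinj ?_, fun hs => hinj ?_⟩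
  · change y ᵥ* Wmat t = Pmat t _ ᵥ* Wmat t
    rw [hy, Pmat_row_vecMul_Wmat hev]
    ext c
    simp only [Rcyc]
    split_ifs <;> first | omega | norm_num
  · change y ᵥ* Wmat t = (Pmat t _ - Pmat t _ + Pmat t _) ᵥ* Wmat t
    rw [hy, add_vecMul, sub_vecMul]
    simp only [Pmat_row_vecMul_Wmat hev]
    ext c
    simp only [Rcyc, Pi.add_apply, Pi.sub_apply]
    split_ifs <;> first | omega | norm_num
  · change y ᵥ* Wmat t = (-Pmat t _) ᵥ* Wmat t
    rw [hy, neg_vecMul, Pmat_row_vecMul_Wmat hev]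
    ext c
    simp only [Rcyc, Pi.neg_apply]
    split_ifs <;> first | omega | norm_num
end
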